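/- arXiv:2203.11154 — 2 statements merged into one kernel-verified Lean document; each statement's English description precedes it below -/
import Mathlib

section
/- Define f₀ : ℝ² → ℝ by f₀(θ₁, θ₂) = (7/24 + (cos θ₁ + cos θ₂)/12 + (cos θ₁ · cos θ₂)/24)·(4 − 2cos θ₁ − 2cos θ₂). Then for every θ in the high-frequency set T^H, 3/4 ≤ f₀(θ) ≤ 4/3. -/
/-!
On `T^H` at least one angle lies in `[π/2, 3π/2)`, so its cosine is nonpositive. In the cosines
`x, y ∈ [-1, 1]`, `f0` is a cubic polynomial; the upper bound `4/3` holds on the whole square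
(attained at `x = y = -1`), and the lower bound `3/4` on the half square `y ≤ 0` (attained at
`x = 1, y = 0`). Both follow from explicit decompositions into nonnegative terms.
-/

open Real

/-- The high-frequency set `T^H = [−π/2, 3π/2)² \ [−π/2, π/2)²`. -/
def TH : Set (ℝ × ℝ) :=
  (Set.Ico (-(π/2)) (3*π/2) ×ˢ Set.Ico (-(π/2)) (3*π/2)) \
    (Set.Ico (-(π/2)) (π/2) ×ˢ Set.Ico (-(π/2)) (π/2))

noncomputable def f0 (θ : ℝ × ℝ) : ℝ :=
  (7/24 + (Real.cos θ.1 + Real.cos θ.2)/12 + (Real.cos θ.1 * Real.cos θ.2)/24) *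
    (4 - 2 * Real.cos θ.1 - 2 * Real.cos θ.2)

noncomputable def f0Poly (x y : ℝ) : ℝ :=
  (7/24 + (x + y)/12 + (x * y)/24) * (4 - 2 * x - 2 * y)

lemma f0_eq_f0Poly (θ : ℝ × ℝ) : f0 θ = f0Poly (cos θ.1) (cos θ.2) := rfl

lemma f0Poly_comm (x y : ℝ) : f0Poly x y = f0Poly y x := by
  unfold f0Poly; ring

/- `16 - 12 f0Poly x y = ((x + y + 2)³ + (x - y)² (2 - x - y)) / 4`. -/
lemma f0Poly_le {x y : ℝ} (hx : x ∈ Set.Icc (-1) 1) (hy : y ∈ Set.Icc (-1) 1) :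
    f0Poly x y ≤ 4/3 := by
  obtain ⟨hx₀, hx₁⟩ := hx
  obtain ⟨hy₀, hy₁⟩ := hy
  unfold f0Poly
  linarith [mul_nonneg (sq_nonneg (x - y)) (by linarith : (0:ℝ) ≤ 2 - x - y),
    pow_nonneg (by linarith : (0:ℝ) ≤ x + y + 2) 3]

/- With `a = 1 - x ∈ [0, 2]` and `b = -y ∈ [0, 1]`,
`12 f0Poly x y - 9 = 2a (2 - a) + 3b (1 - b) + 3a (1 - b) + b ((a - 1/2)² + 11/4) + a b²`. -/
lemma le_f0Poly {x y : ℝ} (hx : x ∈ Set.Icc (-1) 1) (hy : y ∈ Set.Icc (-1) 0) :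
    3/4 ≤ f0Poly x y := by
  obtain ⟨hx₀, hx₁⟩ := hx
  obtain ⟨hy₀, hy₁⟩ := hy
  have ha : 0 ≤ 1 - x := by linarith
  have hb : 0 ≤ -y := by linarith
  unfold f0Poly
  linarith [mul_nonneg ha (by linarith : (0:ℝ) ≤ 1 + x),
    mul_nonneg hb (by linarith : (0:ℝ) ≤ 1 + y),
    mul_nonneg ha (by linarith : (0:ℝ) ≤ 1 + y),
    mul_nonneg hb (sq_nonneg (1/2 - x)), mul_nonneg ha (sq_nonneg y)]

lemma cos_nonpos_or_cos_nonpos_of_mem_TH {θ : ℝ × ℝ} (hθ : θ ∈ TH) :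
    cos θ.1 ≤ 0 ∨ cos θ.2 ≤ 0 := by
  obtain ⟨⟨⟨h₁, h₁'⟩, h₂, h₂'⟩, hlow⟩ := hθ
  have cos_nonpos {c : ℝ} (hc : π/2 ≤ c) (hc' : c < 3*π/2) : cos c ≤ 0 :=
    cos_nonpos_of_pi_div_two_le_of_le hc (by linarith)
  by_contra! hpos
  exact hlow ⟨⟨h₁, not_le.1 fun h => hpos.1.not_ge (cos_nonpos h h₁')⟩,
    ⟨h₂, not_le.1 fun h => hpos.2.not_ge (cos_nonpos h h₂')⟩⟩

theorem stmt_4 : ∀ θ ∈ TH, 3/4 ≤ f0 θ ∧ f0 θ ≤ 4/3 := by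
  intro θ hθ
  have hcos₁ : cos θ.1 ∈ Set.Icc (-1) 1 := ⟨neg_one_le_cos _, cos_le_one _⟩
  have hcos₂ : cos θ.2 ∈ Set.Icc (-1) 1 := ⟨neg_one_le_cos _, cos_le_one _⟩
  rw [f0_eq_f0Poly]
  refine ⟨?_, f0Poly_le hcos₁ hcos₂⟩
  rcases cos_nonpos_or_cos_nonpos_of_mem_TH hθ with h₁ | h₂
  · rw [f0Poly_comm]
    exact le_f0Poly hcos₂ ⟨hcos₁.1, h₁⟩
  · exact le_f0Poly hcos₁ ⟨hcos₂.1, h₂⟩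
end

section
/- Define f₀ : ℝ² → ℝ by f₀(θ₁, θ₂) = (7/24 + (cos θ₁ + cos θ₂)/12 + (cos θ₁ · cos θ₂)/24)·(4 − 2cos θ₁ − 2cos θ₂). Then for every ω ∈ ℝ, the supremum over θ in the high-frequency set T^H of |1 − ω·f₀(θ)| is at least 7/25. -/
/-!
Two high frequencies suffice: `f₀ = 3/4` at `(π/2, 0)` and `f₀ = 4/3` at `(π, π)`. For nodes
`0 < a < b`, no `ω` makes both `|1 - ω a|` and `|1 - ω b|` smaller than `(b - a)/(b + a)`,
the value attained at `ω = 2/(a + b)`; for `a = 3/4`, `b = 4/3` this is `7/25`.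
-/

open Real

theorem div_le_max_abs_one_sub_mul {a b : ℝ} (ha : 0 < a) (hab : a ≤ b) (ω : ℝ) :
    (b - a) / (b + a) ≤ max |1 - ω * a| |1 - ω * b| := by
  have hs : 0 < b + a := by linarith
  rw [div_le_iff₀ hs]
  rcases le_or_gt (ω * (b + a)) 2 with hω | hω
  · have : (b - a) ≤ (1 - ω * a) * (b + a) := by nlinarith
    nlinarith [le_abs_self (1 - ω * a), le_max_left |1 - ω * a| |1 - ω * b|]
  · have : (b - a) ≤ -(1 - ω * b) * (b + a) := by nlinarith
    nlinarith [neg_le_abs (1 - ω * b), le_max_right |1 - ω * a| |1 - ω * b|]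

theorem abs_f0_le (θ : ℝ × ℝ) : |f0 θ| ≤ 4 := by
  have h1 := neg_one_le_cos θ.1
  have h2 := cos_le_one θ.1
  have h3 := neg_one_le_cos θ.2
  have h4 := cos_le_one θ.2
  rw [f0, abs_le]
  constructor <;> nlinarith [mul_nonneg (sub_nonneg.2 h1) (sub_nonneg.2 h3),
    mul_nonneg (sub_nonneg.2 h2) (sub_nonneg.2 h4), mul_nonneg (sub_nonneg.2 h1) (sub_nonneg.2 h4),
    mul_nonneg (sub_nonneg.2 h2) (sub_nonneg.2 h3)]

theorem bddAbove_image_abs_one_sub_mul_f0 (ω : ℝ) (s : Set (ℝ × ℝ)) :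
    BddAbove ((fun θ => |1 - ω * f0 θ|) '' s) := by
  refine ⟨1 + |ω| * 4, ?_⟩
  rintro _ ⟨θ, -, rfl⟩
  calc |1 - ω * f0 θ| ≤ |1| + |ω * f0 θ| := abs_sub _ _
    _ ≤ 1 + |ω| * 4 := by
      rw [abs_one, abs_mul]
      gcongr
      exact abs_f0_le θ

theorem pi_div_two_zero_mem_TH : (π / 2, 0) ∈ TH := by
  have := pi_pos
  refine ⟨⟨⟨by linarith, by linarith⟩, ⟨by linarith, by linarith⟩⟩, fun h => ?_⟩
  exact lt_irrefl _ h.1.2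

theorem pi_pi_mem_TH : (π, π) ∈ TH := by
  have := pi_pos
  refine ⟨⟨⟨by linarith, by linarith⟩, ⟨by linarith, by linarith⟩⟩, fun h => ?_⟩
  linarith [h.1.2]

theorem f0_pi_div_two_zero : f0 (π / 2, 0) = 3 / 4 := by
  norm_num [f0]

theorem f0_pi_pi : f0 (π, π) = 4 / 3 := by
  norm_num [f0]

theorem stmt_7 (ω : ℝ) :
    7/25 ≤ sSup ((fun θ => |1 - ω * f0 θ|) '' TH) := by
  have hbdd := bddAbove_image_abs_one_sub_mul_f0 ω TH
  have hmax := div_le_max_abs_one_sub_mul (a := 3 / 4) (b := 4 / 3) (by norm_num) (by norm_num) ω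
  rw [show (4 / 3 - 3 / 4 : ℝ) / (4 / 3 + 3 / 4) = 7 / 25 by norm_num] at hmax
  refine hmax.trans (max_le ?_ ?_)
  · rw [← f0_pi_div_two_zero]
    exact le_csSup hbdd ⟨_, pi_div_two_zero_mem_TH, rfl⟩
  · rw [← f0_pi_pi]
    exact le_csSup hbdd ⟨_, pi_pi_mem_TH, rfl⟩
end
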